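/- The greedy algorithm for maximizing a monotone submodular function f (with f(∅)=0) subject to a cardinality constraint |S| ≤ k, which at each step adds the element with maximum marginal gain, achieves f(S_greedy) ≥ (1 − (1 − 1/k)^k) · max_{|S| ≤ k} f(S) ≥ (1 − 1/e) · max_{|S| ≤ k} f(S). -/
import Mathlib


/-- the greedy algorithm for maximizing a monotone submodular function under
a cardinality constraint |S| ≤ k achieves a (1-(1-1/k)^k) ≥ (1-1/e) approximation. -/
theorem greedy_submodular_cardinality_approx {X : Type*} [DecidableEq X] [Fintype X]
    (f : Finset X → ℝ)
    (hmono : ∀ S T : Finset X, S ⊆ T → f S ≤ f T)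
    (hsub : ∀ (S T : Finset X) (x : X), S ⊆ T → x ∉ T →
      f (insert x S) - f S ≥ f (insert x T) - f T)
    (h0 : f ∅ = 0) (hnn : ∀ S, 0 ≤ f S)
    (k : ℕ) (hk : 1 ≤ k)
    (S : ℕ → Finset X) (hS0 : S 0 = ∅)
    (hstep : ∀ i < k, ∃ x : X, S (i + 1) = insert x (S i) ∧
      ∀ y : X, f (insert y (S i)) - f (S i) ≤ f (insert x (S i)) - f (S i)) :
    ∀ T : Finset X, T.card ≤ k →
      f (S k) ≥ (1 - (1 - 1 / (k : ℝ)) ^ k) * f T ∧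
      f (S k) ≥ (1 - 1 / Real.exp 1) * f T := by
  intro T hT
  have hkpos : (0:ℝ) < k := by exact_mod_cast Nat.lt_of_lt_of_le Nat.zero_lt_one hk
  have hk1 : (1:ℝ) ≤ k := by exact_mod_cast hk
  have hc : (0:ℝ) ≤ 1 - 1/(k:ℝ) := by
    have : 1/(k:ℝ) ≤ 1 := by
      rw [div_le_one hkpos]; exact hk1
    linarith
  have hgain_nn : ∀ (A : Finset X) (y : X), 0 ≤ f (insert y A) - f A :=
    fun A y => sub_nonneg.mpr (hmono _ _ (Finset.subset_insert y A))
  -- submodular sum bound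
  have hsum : ∀ (B A : Finset X), f (B ∪ A) - f A ≤ ∑ y ∈ B, (f (insert y A) - f A) := by
    intro B A
    induction B using Finset.induction_on with
    | empty => simp
    | @insert a B ha ih =>
      rw [Finset.sum_insert ha, Finset.insert_union]
      have h1 : f (insert a (B ∪ A)) - f (B ∪ A) ≤ f (insert a A) - f A := by
        by_cases haa : a ∈ B ∪ A
        · rw [Finset.insert_eq_self.mpr haa]
          have := hgain_nn A a
          linarith
        · exact hsub A (B ∪ A) a Finset.subset_union_right haa
      linarith
  -- per-step contraction
  have hkey : ∀ i < k, f T - f (S (i+1)) ≤ (1 - 1/(k:ℝ)) * (f T - f (S i)) := by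
    intro i hi
    obtain ⟨x, hx, hmax⟩ := hstep i hi
    have hΔ : 0 ≤ f (S (i+1)) - f (S i) := by rw [hx]; exact hgain_nn _ x
    have h1 : f T - f (S i) ≤ (k:ℝ) * (f (S (i+1)) - f (S i)) := by
      have h2 : f T ≤ f (T ∪ S i) := hmono _ _ Finset.subset_union_left
      have h3 := hsum T (S i)
      have h4 : ∑ y ∈ T, (f (insert y (S i)) - f (S i))
          ≤ (T.card : ℝ) * (f (S (i+1)) - f (S i)) := by
        rw [hx]
        calc ∑ y ∈ T, (f (insert y (S i)) - f (S i))
            ≤ ∑ _y ∈ T, (f (insert x (S i)) - f (S i)) :=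
              Finset.sum_le_sum (fun y _ => hmax y)
          _ = (T.card : ℝ) * (f (insert x (S i)) - f (S i)) := by
              rw [Finset.sum_const, nsmul_eq_mul]
      have h5 : (T.card:ℝ) ≤ k := by exact_mod_cast hT
      have h6 : (T.card:ℝ) * (f (S (i+1)) - f (S i)) ≤ (k:ℝ) * (f (S (i+1)) - f (S i)) :=
        mul_le_mul_of_nonneg_right h5 hΔ
      linarith
    have hdiv : (f T - f (S i)) * (1/(k:ℝ)) ≤ f (S (i+1)) - f (S i) := by
      rw [mul_one_div, div_le_iff₀ hkpos]
      linarith [h1]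
    have hexp : (1 - 1/(k:ℝ)) * (f T - f (S i))
        = (f T - f (S i)) - (f T - f (S i)) * (1/(k:ℝ)) := by ring
    linarith
  -- induction
  have hind : ∀ i ≤ k, f T - f (S i) ≤ (1 - 1/(k:ℝ))^i * f T := by
    intro i
    induction i with
    | zero => intro _; simp [hS0, h0]
    | succ n ih =>
      intro hn
      have h1 := hkey n (by omega)
      have h2 := ih (by omega)
      calc f T - f (S (n+1)) ≤ (1 - 1/(k:ℝ)) * (f T - f (S n)) := h1
        _ ≤ (1 - 1/(k:ℝ)) * ((1 - 1/(k:ℝ))^n * f T) := mul_le_mul_of_nonneg_left h2 hc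
        _ = (1 - 1/(k:ℝ))^(n+1) * f T := by ring
  have hmain : f (S k) ≥ (1 - (1 - 1 / (k : ℝ)) ^ k) * f T := by
    have := hind k le_rfl
    have he : (1 - (1 - 1 / (k : ℝ)) ^ k) * f T
        = f T - (1 - 1/(k:ℝ))^k * f T := by ring
    linarith
  refine ⟨hmain, ?_⟩
  -- (1-1/k)^k ≤ 1/e
  have hpow : (1 - 1/(k:ℝ))^k ≤ 1 / Real.exp 1 := by
    have h1 : (1:ℝ) - 1/(k:ℝ) ≤ Real.exp (-(1/(k:ℝ))) := by
      have := Real.add_one_le_exp (-(1/(k:ℝ)))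
      linarith
    have h2 : (1 - 1/(k:ℝ))^k ≤ (Real.exp (-(1/(k:ℝ))))^k :=
      pow_le_pow_left₀ hc h1 k
    have h3 : (Real.exp (-(1/(k:ℝ))))^k = Real.exp ((k:ℝ) * (-(1/(k:ℝ)))) := by
      rw [← Real.exp_nat_mul]
    have h4 : (k:ℝ) * (-(1/(k:ℝ))) = -1 := by
      field_simp
    rw [h3, h4, Real.exp_neg] at h2
    simpa [one_div] using h2
  have : (1 - 1 / Real.exp 1) * f T ≤ (1 - (1 - 1 / (k : ℝ)) ^ k) * f T := by
    apply mul_le_mul_of_nonneg_right _ (hnn T)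
    linarith
  linarith
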